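/- Let f₁, …, fₙ be elements of A. If the sequence f₁, …, fₙ, regarded as elements of B, is weakly regular on B (that is, for each i, the image of f_i is a nonzerodivisor on B/(f₁, …, f_{i−1})B), then the sequence f₁, …, fₙ is weakly regular on A (for each i, f_i is a nonzerodivisor on A/(f₁, …, f_{i−1})A). -/

import Mathlib

/-!
The Reynolds operator `b ↦ |G|⁻¹ ∑ g • b` is a `B^G`-linear retraction of `B` onto `A = B^G`.
Hence every ideal `I` of `A` satisfies `IB ∩ A = I`, so a relation `fᵢ x ∈ (f₁, …, fᵢ₋₁)A` with
`x ∈ A` can be pushed to `B`, cancelled there by regularity, and pulled back to `A`.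
-/

open RingTheory.Sequence

/-- The subring of `G`-invariant elements of `B`. -/
def fixedSubring (G B : Type*) [Group G] [CommRing B] [MulSemiringAction G B] : Subring B where
  carrier := {b | ∀ g : G, g • b = b}
  mul_mem' := by intro a b ha hb g; rw [smul_mul', ha, hb]
  one_mem' := fun g => smul_one g
  add_mem' := by intro a b ha hb g; rw [smul_add, ha, hb]
  zero_mem' := fun g => smul_zero g
  neg_mem' := by intro a ha g; rw [smul_neg, ha]

theorem Ideal.comap_map_algebraMap_of_retraction {R S : Type*} [CommSemiring R]
    [CommSemiring S] [Algebra R S] (ρ : S →ₗ[R] R) (hρ : ∀ r, ρ (algebraMap R S r) = r)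
    (I : Ideal R) : (I.map (algebraMap R S)).comap (algebraMap R S) = I := by
  refine le_antisymm (fun r hr => ?_) le_comap_map
  have hr' : algebraMap R S r ∈ I • (⊤ : Submodule R S) := by rwa [Ideal.smul_top_eq_map]
  have hρr := Submodule.mem_map_of_mem (f := ρ) hr'
  rw [Submodule.map_smul'', hρ] at hρr
  exact Submodule.smul_le.2 (fun a ha b _ => I.mul_mem_right b ha) hρr

theorem RingTheory.Sequence.IsWeaklyRegular.of_map {R S : Type*} [CommRing R] [CommRing S]
    {f : R →+* S} (hf : ∀ I : Ideal R, (I.map f).comap f = I) {rs : List R}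
    (h : IsWeaklyRegular S (rs.map f)) : IsWeaklyRegular R rs := by
  refine ⟨fun i hi => ?_⟩
  have hreg := h.regular_mod_prev i (by simpa using hi)
  rw [← List.map_take, ← Ideal.map_ofList] at hreg
  simp only [isSMulRegular_quotient_iff_mem_of_smul_mem, smul_eq_mul, Ideal.mul_top,
    List.getElem_map] at hreg ⊢
  intro x hx
  rw [← hf (Ideal.ofList (rs.take i))] at hx ⊢
  exact hreg (f x) (by simpa using hx)

theorem smul_invOf_of_smul_eq {M A : Type*} [Monoid M] [Monoid A] [MulDistribMulAction M A]
    {g : M} {a : A} [Invertible a] (h : g • a = a) : g • ⅟a = ⅟a := by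
  have hmul : g • a * g • ⅟a = 1 := by rw [← smul_mul', mul_invOf_self, smul_one]
  rw [h] at hmul
  exact (invOf_eq_right_inv hmul).symm

namespace fixedSubring

variable {G B : Type*} [Group G] [Fintype G] [CommRing B] [MulSemiringAction G B]

theorem sum_smul_mem (b : B) : ∑ g : G, g • b ∈ fixedSubring G B := fun g => by
  rw [Finset.smul_sum]
  exact Fintype.sum_equiv (Equiv.mulLeft g) _ _ fun h => (mul_smul g h b).symm

theorem invOf_card_mem [Invertible (Fintype.card G : B)] :
    ⅟(Fintype.card G : B) ∈ fixedSubring G B := fun g =>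
  smul_invOf_of_smul_eq (map_natCast (MulSemiringAction.toRingHom G B g) _)

noncomputable def reynolds [Invertible (Fintype.card G : B)] :
    B →ₗ[fixedSubring G B] fixedSubring G B where
  toFun b := ⟨⅟(Fintype.card G : B) * ∑ g : G, g • b, mul_mem invOf_card_mem (sum_smul_mem b)⟩
  map_add' b c := by
    ext
    simp only [smul_add, Finset.sum_add_distrib, mul_add, Subring.coe_add]
  map_smul' a b := by
    ext
    have ha : ∀ g : G, g • (a : B) = a := a.2
    simp only [Subring.smul_def, smul_eq_mul, smul_mul', ha, ← Finset.mul_sum, RingHom.id_apply,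
      Subring.coe_mul, mul_left_comm]

theorem reynolds_algebraMap [Invertible (Fintype.card G : B)] (a : fixedSubring G B) :
    reynolds (algebraMap (fixedSubring G B) B a) = a := by
  ext
  show ⅟(Fintype.card G : B) * ∑ g : G, g • (a : B) = a
  have ha : ∀ g : G, g • (a : B) = a := a.2
  simp only [ha, Finset.sum_const, Finset.card_univ, nsmul_eq_mul, invOf_mul_cancel_left]

end fixedSubring

/-- A sequence of invariant elements that is weakly regular on `B` is weakly regular on
the invariant ring `A = B^G`. -/
theorem isWeaklyRegular_fixed_of_isWeaklyRegular
    {G B : Type*} [Group G] [Fintype G] [CommRing B] [MulSemiringAction G B]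
    (hcard : Invertible (Fintype.card G : B))
    (fs : List (fixedSubring G B))
    (hreg : IsWeaklyRegular B (fs.map (fun a => (a : B)))) :
    IsWeaklyRegular (fixedSubring G B) fs := by
  refine IsWeaklyRegular.of_map
    (Ideal.comap_map_algebraMap_of_retraction fixedSubring.reynolds
      fixedSubring.reynolds_algebraMap) ?_
  -- the coercion in `hreg` elaborates through the list monad
  convert hreg using 2
  simp only [List.pure_def, List.bind_eq_flatMap, List.flatMap_subtype, List.flatMap_singleton',
    List.map_id_fun', id_eq]
  rfl
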